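/- arXiv:2407.17401 — 4 statements merged into one kernel-verified Lean document; each statement's English description precedes it below -/
import Mathlib

section
/- Let n ≥ 2 be an integer and ρ₂, …, ρₙ ∈ [−1,1]. On a probability space let Y₁ be a Rademacher variable (taking values −1 and 1 with probability 1/2 each) and, for i ∈ {2,…,n}, let Zᵢ be a random variable with values in {−1,1} and P(Zᵢ = 1) = (1+ρᵢ)/2, with Y₁, Z₂, …, Zₙ mutually independent. Define Y′ᵢ := Y₁·∏_{j=2}^{i} Zⱼ for i ∈ {1,…,n}. Then every Y′ᵢ is a Rademacher variable, i.e. P(Y′ᵢ = 1) = P(Y′ᵢ = −1) = 1/2, and for all 1 ≤ i ≤ j ≤ n one has E[Y′ᵢ · Y′ⱼ] = ∏_{k=i+1}^{j} ρₖ; in particular the vector (Y′₁,…,Y′ₙ) realizes Rademacher marginals with the prescribed multiplicative correlation structure ρ_{j,i} = ∏_{k=i+1}^{j} ρ_{k,k−1}. -/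
open MeasureTheory ProbabilityTheory Finset

/-! Put `W₁ = Y₁` and `Wₖ = Zₖ` for `k ≥ 2`, so that `Y'ᵢ = ∏_{k ≤ i} Wₖ` with independent `Wₖ`.
Then `E[Y'ᵢ] = E[Y₁] ∏ E[Zₖ] = 0`, which for a `±1`-valued variable means it is Rademacher, and
since `Wₖ² = 1` the product `Y'ᵢ Y'ⱼ` collapses to `∏_{i < k ≤ j} Zₖ`, whose mean is `∏ ρₖ`. -/

section SignProducts

variable {ι M R : Type*}

lemma Finset.prod_eq_one_or_neg_one [CommRing R] [NoZeroDivisors R] {f : ι → R} {s : Finset ι}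
    (hf : ∀ i ∈ s, f i = 1 ∨ f i = -1) : ∏ i ∈ s, f i = 1 ∨ ∏ i ∈ s, f i = -1 := by
  rw [← mul_self_eq_one_iff, ← prod_mul_distrib]
  exact prod_eq_one fun i hi => mul_self_eq_one_iff.mpr (hf i hi)

lemma Finset.prod_Icc_mul_prod_Icc_of_mul_self_eq_one [CommMonoid M] {f : ℕ → M} {m i j : ℕ}
    (hmi : m ≤ i) (hij : i ≤ j) (hf : ∀ k ∈ Icc (m + 1) i, f k * f k = 1) :
    (∏ k ∈ Icc (m + 1) i, f k) * ∏ k ∈ Icc (m + 1) j, f k = ∏ k ∈ Icc (i + 1) j, f k := by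
  simp only [Icc_add_one_left_eq_Ioc] at hf ⊢
  rw [← prod_Ioc_consecutive f hmi hij, ← mul_assoc, ← prod_mul_distrib, prod_eq_one hf, one_mul]

end SignProducts

section SignVariables

variable {Ω : Type*} {mΩ : MeasurableSpace Ω} {μ : Measure Ω} {X : Ω → ℝ}

lemma setOf_eq_neg_one_eq_compl (hX : ∀ ω, X ω = 1 ∨ X ω = -1) :
    {ω | X ω = -1} = {ω | X ω = 1}ᶜ := by
  ext ω
  rcases hX ω with h | h <;> norm_num [h]

variable [IsProbabilityMeasure μ]

lemma integral_eq_two_mul_measureReal_sub_one (hXm : Measurable X)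
    (hX : ∀ ω, X ω = 1 ∨ X ω = -1) :
    ∫ ω, X ω ∂μ = 2 * μ.real {ω | X ω = 1} - 1 := by
  set A := {ω | X ω = 1}
  have hA : MeasurableSet A := hXm (measurableSet_singleton 1)
  have hsplit : X = fun ω => A.indicator 1 ω - Aᶜ.indicator 1 ω := by
    ext ω
    rcases hX ω with h | h <;> norm_num [A, Set.indicator, h]
  rw [hsplit, integral_sub ((integrable_const 1).indicator hA)
    ((integrable_const 1).indicator hA.compl), integral_indicator_one hA,
    integral_indicator_one hA.compl, probReal_compl_eq_one_sub hA]
  ring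

lemma integral_eq_of_measure_eq_one_eq_ofReal (hXm : Measurable X)
    (hX : ∀ ω, X ω = 1 ∨ X ω = -1) {r : ℝ} (hr : -1 ≤ r)
    (hlaw : μ {ω | X ω = 1} = ENNReal.ofReal ((1 + r) / 2)) :
    ∫ ω, X ω ∂μ = r := by
  rw [integral_eq_two_mul_measureReal_sub_one hXm hX, measureReal_def, hlaw,
    ENNReal.toReal_ofReal (by linarith)]
  ring

lemma measure_eq_one_eq_half_of_integral_eq_zero (hXm : Measurable X)
    (hX : ∀ ω, X ω = 1 ∨ X ω = -1) (hmean : ∫ ω, X ω ∂μ = 0) :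
    μ {ω | X ω = 1} = 1 / 2 ∧ μ {ω | X ω = -1} = 1 / 2 := by
  have hA : MeasurableSet {ω | X ω = 1} := hXm (measurableSet_singleton 1)
  have hreal : μ.real {ω | X ω = 1} = 1 / 2 := by
    linarith [integral_eq_two_mul_measureReal_sub_one (μ := μ) hXm hX]
  have hhalf : μ {ω | X ω = 1} = 1 / 2 := by
    rw [← ofReal_measureReal, hreal, ENNReal.ofReal_div_of_pos two_pos]
    simp
  refine ⟨hhalf, ?_⟩
  rw [setOf_eq_neg_one_eq_compl hX, prob_compl_eq_one_sub hA, hhalf, one_div,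
    ENNReal.one_sub_inv_two]

end SignVariables

namespace ProbabilityTheory

variable {Ω ι κ 𝕜 : Type*} {mΩ : MeasurableSpace Ω} {μ : Measure Ω} [RCLike 𝕜]

lemma iIndepFun.integral_finset_prod {X : ι → Ω → 𝕜} (hX : iIndepFun X μ)
    (mX : ∀ i, AEStronglyMeasurable (X i) μ) (s : Finset ι) :
    ∫ ω, ∏ i ∈ s, X i ω ∂μ = ∏ i ∈ s, ∫ ω, X i ω ∂μ := by
  calc ∫ ω, ∏ i ∈ s, X i ω ∂μ = ∫ ω, ∏ i : s, X i ω ∂μ := by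
        congr with ω
        exact (prod_coe_sort s fun i => X i ω).symm
    _ = ∏ i ∈ s, ∫ ω, X i ω ∂μ := by
        rw [(hX.precomp Subtype.val_injective).integral_fun_prod_eq_prod_integral
          fun i : s => mX i, prod_coe_sort s fun i => ∫ ω, X i ω ∂μ]

lemma iIndepFun.integral_finset_prod_of_comp {X : κ → Ω → 𝕜} {e : ι → κ}
    (he : Function.Injective e) (hX : iIndepFun (fun i => X (e i)) μ)
    (mX : ∀ i, AEStronglyMeasurable (X (e i)) μ) {s : Finset κ} (hs : ↑s ⊆ Set.range e) :
    ∫ ω, ∏ k ∈ s, X k ω ∂μ = ∏ k ∈ s, ∫ ω, X k ω ∂μ := by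
  have hpre (g : κ → 𝕜) : ∏ i ∈ s.preimage e he.injOn, g (e i) = ∏ k ∈ s, g k :=
    prod_preimage e s he.injOn g fun k hk hk' => (hk' (hs hk)).elim
  calc ∫ ω, ∏ k ∈ s, X k ω ∂μ = ∫ ω, ∏ i ∈ s.preimage e he.injOn, X (e i) ω ∂μ := by
        congr with ω
        exact (hpre fun k => X k ω).symm
    _ = ∏ k ∈ s, ∫ ω, X k ω ∂μ := by
        rw [hX.integral_finset_prod mX, hpre fun k => ∫ ω, X k ω ∂μ]

end ProbabilityTheory

section PartialProducts

variable {Ω : Type*} {mΩ : MeasurableSpace Ω} {μ : Measure Ω} {n : ℕ} {W : ℕ → Ω → ℝ}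

lemma integral_prod_eq_prod_integral_of_subset_Icc
    (hindep : iIndepFun (fun i : Fin n => W (i + 1)) μ) (hm : ∀ k, Measurable (W k))
    {s : Finset ℕ} (hs : s ⊆ Icc 1 n) :
    ∫ ω, ∏ k ∈ s, W k ω ∂μ = ∏ k ∈ s, ∫ ω, W k ω ∂μ := by
  refine hindep.integral_finset_prod_of_comp (e := fun i : Fin n => (i : ℕ) + 1)
    (fun a b h => Fin.ext (by simpa using h)) (fun i => (hm _).aestronglyMeasurable) ?_
  intro k hk
  have hk := mem_Icc.mp (hs hk)
  exact ⟨⟨k - 1, by omega⟩, Nat.sub_add_cancel hk.1⟩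

lemma integral_prod_Icc_mul_prod_Icc
    (hindep : iIndepFun (fun i : Fin n => W (i + 1)) μ) (hm : ∀ k, Measurable (W k))
    (hval : ∀ k ∈ Icc 1 n, ∀ ω, W k ω = 1 ∨ W k ω = -1)
    {i j : ℕ} (hij : i ≤ j) (hjn : j ≤ n) :
    ∫ ω, (∏ k ∈ Icc 1 i, W k ω) * ∏ k ∈ Icc 1 j, W k ω ∂μ =
      ∏ k ∈ Icc (i + 1) j, ∫ ω, W k ω ∂μ := by
  have hsquare (ω : Ω) : ∀ k ∈ Icc (0 + 1) i, W k ω * W k ω = 1 := fun k hk =>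
    mul_self_eq_one_iff.mpr (hval k (Icc_subset_Icc le_rfl (hij.trans hjn) hk) ω)
  simp only [prod_Icc_mul_prod_Icc_of_mul_self_eq_one i.zero_le hij (hsquare _)]
  exact integral_prod_eq_prod_integral_of_subset_Icc hindep hm (Icc_subset_Icc (by omega) hjn)

variable [IsProbabilityMeasure μ]

lemma measure_prod_Icc_eq_one_eq_half
    (hindep : iIndepFun (fun i : Fin n => W (i + 1)) μ) (hm : ∀ k, Measurable (W k))
    (hval : ∀ k ∈ Icc 1 n, ∀ ω, W k ω = 1 ∨ W k ω = -1) (hmean : ∫ ω, W 1 ω ∂μ = 0)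
    {i : ℕ} (hi1 : 1 ≤ i) (hin : i ≤ n) :
    μ {ω | ∏ k ∈ Icc 1 i, W k ω = 1} = 1 / 2 ∧ μ {ω | ∏ k ∈ Icc 1 i, W k ω = -1} = 1 / 2 := by
  have hsub : Icc 1 i ⊆ Icc 1 n := Icc_subset_Icc le_rfl hin
  refine measure_eq_one_eq_half_of_integral_eq_zero
    (Finset.measurable_fun_prod _ fun k _ => hm k)
    (fun ω => prod_eq_one_or_neg_one fun k hk => hval k (hsub hk) ω) ?_
  rw [integral_prod_eq_prod_integral_of_subset_Icc hindep hm hsub]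
  exact prod_eq_zero (by simp [hi1]) hmean

end PartialProducts

theorem rademacher_decomposition_general
    {Ω : Type*} [MeasureSpace Ω] [IsProbabilityMeasure (ℙ : Measure Ω)]
    (n : ℕ) (ρ : ℕ → ℝ)
    (hρ : ∀ i, 2 ≤ i → i ≤ n → ρ i ∈ Set.Icc (-1 : ℝ) 1)
    (Y1 : Ω → ℝ) (Z : ℕ → Ω → ℝ)
    (hY1m : Measurable Y1) (hZm : ∀ i, Measurable (Z i))
    (hY1val : ∀ ω, Y1 ω = 1 ∨ Y1 ω = -1)
    (hY1law : ℙ {ω | Y1 ω = 1} = 1 / 2)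
    (hZval : ∀ i, 2 ≤ i → i ≤ n → ∀ ω, Z i ω = 1 ∨ Z i ω = -1)
    (hZlaw : ∀ i, 2 ≤ i → i ≤ n →
      ℙ {ω | Z i ω = 1} = ENNReal.ofReal ((1 + ρ i) / 2))
    (hIndep : iIndepFun
      (fun i : Fin n => if (i : ℕ) = 0 then Y1 else Z ((i : ℕ) + 1)) ℙ)
    (Y' : ℕ → Ω → ℝ)
    (hY' : ∀ i, 1 ≤ i → i ≤ n → ∀ ω,
      Y' i ω = Y1 ω * ∏ j ∈ Finset.Icc 2 i, Z j ω) :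
    (∀ i, 1 ≤ i → i ≤ n →
      ℙ {ω | Y' i ω = 1} = 1 / 2 ∧ ℙ {ω | Y' i ω = -1} = 1 / 2) ∧
    (∀ i j, 1 ≤ i → i ≤ j → j ≤ n →
      ∫ ω, Y' i ω * Y' j ω ∂ℙ = ∏ k ∈ Finset.Icc (i + 1) j, ρ k) := by
  set W := Function.update Z 1 Y1 with hW
  have hWindep : iIndepFun (fun i : Fin n => W (i + 1)) ℙ := by
    convert hIndep using 2 with i
    simp [hW, Function.update_apply]
  have hWm (k : ℕ) : Measurable (W k) := by
    rcases eq_or_ne k 1 with rfl | hk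
    · simpa [hW] using hY1m
    · simpa [hW, hk] using hZm k
  have hWval : ∀ k ∈ Icc 1 n, ∀ ω, W k ω = 1 ∨ W k ω = -1 := by
    intro k hk ω
    rcases eq_or_ne k 1 with rfl | hk1
    · simpa [hW] using hY1val ω
    · simpa [hW, hk1] using hZval k (by grind) (mem_Icc.mp hk).2 ω
  have hY'W : ∀ i, 1 ≤ i → i ≤ n → Y' i = fun ω => ∏ k ∈ Icc 1 i, W k ω := by
    intro i hi1 hin
    ext ω
    rw [hY' i hi1 hin, ← insert_Icc_add_one_left_eq_Icc hi1, prod_insert (by simp)]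
    congr 1
    exact prod_congr rfl fun k hk => by simp [hW, show k ≠ 1 by grind]
  refine ⟨fun i hi1 hin => ?_, fun i j hi1 hij hjn => ?_⟩
  · have hmean : ∫ ω, W 1 ω = 0 := by
      rw [hW, Function.update_self, integral_eq_two_mul_measureReal_sub_one hY1m hY1val,
        measureReal_def, hY1law]
      norm_num
    rw [hY'W i hi1 hin]
    exact measure_prod_Icc_eq_one_eq_half hWindep hWm hWval hmean hi1 hin
  · rw [hY'W i hi1 (hij.trans hjn), hY'W j (hi1.trans hij) hjn,
      integral_prod_Icc_mul_prod_Icc hWindep hWm hWval hij hjn]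
    refine prod_congr rfl fun k hk => ?_
    obtain ⟨hik, hkj⟩ := mem_Icc.mp hk
    rw [hW, Function.update_of_ne (by omega)]
    exact integral_eq_of_measure_eq_one_eq_ofReal (hZm k) (hZval k (by omega) (by omega))
      (hρ k (by omega) (by omega)).1 (hZlaw k (by omega) (by omega))

/-- Decomposition of correlated Rademacher variables into independent two-point variables:
if `Y₁` is Rademacher, `Zᵢ` (`2 ≤ i ≤ n`) takes values in `{-1,1}` with
`P(Zᵢ = 1) = (1+ρᵢ)/2`, and `Y₁, Z₂, …, Zₙ` are mutually independent, then the products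
`Y'ᵢ = Y₁ ∏_{j=2}^{i} Zⱼ` are Rademacher variables with
`E[Y'ᵢ Y'ⱼ] = ∏_{k=i+1}^{j} ρₖ` for `1 ≤ i ≤ j ≤ n`. -/
theorem rademacher_decomposition
    {Ω : Type*} [MeasureSpace Ω] [IsProbabilityMeasure (ℙ : Measure Ω)]
    (n : ℕ) (hn : 2 ≤ n) (ρ : ℕ → ℝ)
    (hρ : ∀ i, 2 ≤ i → i ≤ n → ρ i ∈ Set.Icc (-1 : ℝ) 1)
    (Y1 : Ω → ℝ) (Z : ℕ → Ω → ℝ)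
    (hY1m : Measurable Y1) (hZm : ∀ i, Measurable (Z i))
    (hY1val : ∀ ω, Y1 ω = 1 ∨ Y1 ω = -1)
    (hY1law : ℙ {ω | Y1 ω = 1} = 1 / 2)
    (hZval : ∀ i, 2 ≤ i → i ≤ n → ∀ ω, Z i ω = 1 ∨ Z i ω = -1)
    (hZlaw : ∀ i, 2 ≤ i → i ≤ n →
      ℙ {ω | Z i ω = 1} = ENNReal.ofReal ((1 + ρ i) / 2))
    (hIndep : iIndepFun
      (fun i : Fin n => if (i : ℕ) = 0 then Y1 else Z ((i : ℕ) + 1)) ℙ)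
    (Y' : ℕ → Ω → ℝ)
    (hY' : ∀ i, 1 ≤ i → i ≤ n → ∀ ω,
      Y' i ω = Y1 ω * ∏ j ∈ Finset.Icc 2 i, Z j ω) :
    (∀ i, 1 ≤ i → i ≤ n →
      ℙ {ω | Y' i ω = 1} = 1 / 2 ∧ ℙ {ω | Y' i ω = -1} = 1 / 2) ∧
    (∀ i j, 1 ≤ i → i ≤ j → j ≤ n →
      ∫ ω, Y' i ω * Y' j ω ∂ℙ = ∏ k ∈ Finset.Icc (i + 1) j, ρ k) :=
  rademacher_decomposition_general n ρ hρ Y1 Z hY1m hZm hY1val hY1law hZval hZlaw hIndep Y' hY'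
end

section
/- In the zero-autocorrelation grid market model, for every v ∈ {1,2,3} and all integers n, L with 1 ≤ L < n (and k_v(n,L) ≥ 1), the empirical variance is unbiased for the variance of a price increment of duration Lτ: E[V̂_v(n,L)] = Lτσ² + S²/2. -/
open MeasureTheory ProbabilityTheory Filter Finset
open scoped NNReal ENNReal Topology

/-- Observed log-price on the grid: `p_i = Σ_{j<i} ξ_j + η_i` with `η_i = (S/2)·X_i`. -/
noncomputable def price {Ω : Type*} (ξ X : ℕ → Ω → ℝ) (S : ℝ) (i : ℕ) (ω : Ω) : ℝ :=
  (∑ j ∈ Finset.range i, ξ j ω) + S / 2 * X i ω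

/-- Empirical variance with overlapping increments, `k₁(n,L) = n − L`. -/
noncomputable def Vhat1 {Ω : Type*} (p : ℕ → Ω → ℝ) (n L : ℕ) (ω : Ω) : ℝ :=
  ((n - L : ℕ) : ℝ)⁻¹ * ∑ i ∈ Finset.range (n - L), (p (i + L) ω - p i ω) ^ 2

/-- Empirical variance with non-overlapping increments, `k₂(n,L) = ⌊(n−1)/L⌋`. -/
noncomputable def Vhat2 {Ω : Type*} (p : ℕ → Ω → ℝ) (n L : ℕ) (ω : Ω) : ℝ :=
  (((n - 1) / L : ℕ) : ℝ)⁻¹ *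
    ∑ i ∈ Finset.range ((n - 1) / L), (p ((i + 1) * L) ω - p (i * L) ω) ^ 2

/-- Empirical variance with strictly disjoint increments, `k₃(n,L) = ⌊n/(L+1)⌋`. -/
noncomputable def Vhat3 {Ω : Type*} (p : ℕ → Ω → ℝ) (n L : ℕ) (ω : Ω) : ℝ :=
  ((n / (L + 1) : ℕ) : ℝ)⁻¹ *
    ∑ i ∈ Finset.range (n / (L + 1)), (p (i + (i + 1) * L) ω - p (i + i * L) ω) ^ 2

/-- Spread estimator `Ŝ²_{1,v}(n,L,L') = (2/(L'−L))(L'·V̂_v(n,L) − L·V̂_v(n,L'))`. -/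
noncomputable def Shat {Ω : Type*} (Vh : ℕ → ℕ → Ω → ℝ) (n L L' : ℕ) (ω : Ω) : ℝ :=
  2 / ((L' : ℝ) - (L : ℝ)) * ((L' : ℝ) * Vh n L ω - (L : ℝ) * Vh n L' ω)

/-! An increment `p_{a+d} - p_a = ∑_{a ≤ j < a+d} ξ_j + (S/2) X_{a+d} - (S/2) X_a` is a linear
combination of independent, centred, square-integrable variables, so its second moment is
`d σ² τ + 2 (S/2)²`, whatever the overlap between increments. Each `V̂_v` averages `k_v ≥ 1`
squared increments of length `L`, hence has exactly this mean. -/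

section Orthogonality

variable {Ω ι : Type*} [MeasurableSpace Ω] {μ : Measure Ω} {s : Finset ι}

theorem integral_sq_sum_of_pairwise_indepFun [IsFiniteMeasure μ] {Y : ι → Ω → ℝ}
    (hY : ∀ i ∈ s, MemLp (Y i) 2 μ) (hmean : ∀ i ∈ s, μ[Y i] = 0)
    (hindep : Set.Pairwise ↑s fun i j => Y i ⟂ᵢ[μ] Y j) :
    ∫ ω, (∑ i ∈ s, Y i ω) ^ 2 ∂μ = ∑ i ∈ s, ∫ ω, Y i ω ^ 2 ∂μ := by
  have hsum_mean : μ[∑ i ∈ s, Y i] = 0 := by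
    simp only [Finset.sum_apply]
    rw [integral_finsetSum s fun i hi => (hY i hi).integrable one_le_two]
    exact Finset.sum_eq_zero hmean
  have hsum_meas : AEMeasurable (∑ i ∈ s, Y i) μ :=
    Finset.aemeasurable_sum s fun i hi => (hY i hi).aemeasurable
  have hvar := IndepFun.variance_sum hY hindep
  rw [variance_of_integral_eq_zero hsum_meas hsum_mean] at hvar
  simp only [Finset.sum_apply] at hvar
  rw [hvar]
  exact Finset.sum_congr rfl fun i hi =>
    variance_of_integral_eq_zero (hY i hi).aemeasurable (hmean i hi)

theorem integral_sq_sum_mul_of_iIndepFun [IsFiniteMeasure μ] {Z : ι → Ω → ℝ}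
    (hZ : iIndepFun Z μ) (hL2 : ∀ i ∈ s, MemLp (Z i) 2 μ) (hmean : ∀ i ∈ s, μ[Z i] = 0)
    (w : ι → ℝ) :
    ∫ ω, (∑ i ∈ s, w i * Z i ω) ^ 2 ∂μ = ∑ i ∈ s, w i ^ 2 * ∫ ω, Z i ω ^ 2 ∂μ := by
  rw [integral_sq_sum_of_pairwise_indepFun (fun i hi => (hL2 i hi).const_mul (w i))
    (fun i hi => by simp only [integral_const_mul, hmean i hi, mul_zero])
    (fun i _ j _ hij =>
      (hZ.indepFun hij).comp (measurable_const_mul _) (measurable_const_mul _))]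
  simp only [mul_pow, integral_const_mul]

end Orthogonality

section Moments

variable {Ω : Type*} [MeasurableSpace Ω] {μ : Measure Ω} {Y : Ω → ℝ}

theorem ProbabilityTheory.HasLaw.memLp_gaussianReal {m : ℝ} {v : ℝ≥0}
    (hY : HasLaw Y (gaussianReal m v) μ) : MemLp Y 2 μ := by
  have hid : MemLp id 2 (μ.map Y) := hY.map_eq ▸ memLp_id_gaussianReal 2
  exact (memLp_map_measure_iff aestronglyMeasurable_id hY.aemeasurable).mp hid

theorem ProbabilityTheory.HasLaw.integral_sq_gaussianReal_zero {v : ℝ≥0}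
    (hY : HasLaw Y (gaussianReal 0 v) μ) : ∫ ω, Y ω ^ 2 ∂μ = v := by
  have hmean : μ[Y] = 0 := by rw [hY.integral_eq, integral_id_gaussianReal]
  rw [← variance_of_integral_eq_zero hY.aemeasurable hmean, hY.variance_eq,
    variance_id_gaussianReal]

theorem integral_eq_zero_of_forall_eq_one_or_neg_one [IsProbabilityMeasure μ] (hY : Measurable Y)
    (hval : ∀ ω, Y ω = 1 ∨ Y ω = -1) (hlaw : μ {ω | Y ω = 1} = 1 / 2) : μ[Y] = 0 := by
  have hA : MeasurableSet {ω | Y ω = 1} := hY (measurableSet_singleton 1)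
  have hY_eq : ∀ ω, Y ω = Set.indicator {ω | Y ω = 1} (fun _ => (2:ℝ)) ω - 1 := by
    intro ω
    rcases hval ω with h | h
    · rw [Set.indicator_of_mem (by simpa using h), h]; norm_num
    · rw [Set.indicator_of_notMem (by norm_num [h]), h]; norm_num
  rw [integral_congr_ae (ae_of_all _ hY_eq),
    integral_sub ((integrable_const (2:ℝ)).indicator hA) (integrable_const 1),
    integral_indicator_const _ hA, integral_const, measureReal_def, measureReal_def, hlaw]
  norm_num [ENNReal.toReal_div]

end Moments

theorem integral_inv_mul_sum_of_integral_eq {Ω : Type*} [MeasurableSpace Ω] {μ : Measure Ω}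
    {f : ℕ → Ω → ℝ} {m : ℝ} {k : ℕ} (hk : k ≠ 0) (hf : ∀ i ∈ range k, Integrable (f i) μ)
    (hm : ∀ i ∈ range k, ∫ ω, f i ω ∂μ = m) :
    ∫ ω, (k : ℝ)⁻¹ * ∑ i ∈ range k, f i ω ∂μ = m := by
  rw [integral_const_mul, integral_finsetSum _ hf, Finset.sum_congr rfl hm, Finset.sum_const,
    card_range, nsmul_eq_mul, inv_mul_cancel_left₀ (Nat.cast_ne_zero.mpr hk)]

theorem price_add_sub_price {Ω : Type*} {ξ X : ℕ → Ω → ℝ} {S : ℝ} (a : ℕ) {d : ℕ} (hd : 0 < d)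
    (ω : Ω) :
    price ξ X S (a + d) ω - price ξ X S a ω =
      ∑ k ∈ (Ico a (a + d)).disjSum {a + d, a},
        Sum.elim (fun _ => 1) (fun i => if i = a + d then S / 2 else -(S / 2)) k *
          Sum.elim ξ X k ω := by
  rw [sum_disjSum, sum_pair (by omega)]
  simp only [price, Sum.elim_inl, Sum.elim_inr, one_mul, if_pos,
    if_neg (show a ≠ a + d by omega), ← sum_range_add_sum_Ico _ (show a ≤ a + d by omega)]
  ring

section GridModel

variable {Ω : Type*} [MeasureSpace Ω] [IsProbabilityMeasure (ℙ : Measure Ω)] {τ σ S : ℝ}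
  {ξ X : ℕ → Ω → ℝ}

theorem memLp_sumElim (hξm : ∀ i, Measurable (ξ i)) (hXm : ∀ i, Measurable (X i))
    (hξ : ∀ i, Measure.map (ξ i) ℙ = gaussianReal 0 (Real.toNNReal (σ ^ 2 * τ)))
    (hXval : ∀ i ω, X i ω = 1 ∨ X i ω = -1) (k : ℕ ⊕ ℕ) : MemLp (Sum.elim ξ X k) 2 ℙ := by
  rcases k with j | i
  · exact ProbabilityTheory.HasLaw.memLp_gaussianReal ⟨(hξm j).aemeasurable, hξ j⟩
  · refine MemLp.of_bound (hXm i).aestronglyMeasurable 1 (ae_of_all _ fun ω => ?_)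
    rcases hXval i ω with h | h <;> simp [h]

theorem integral_sumElim_eq_zero (hξm : ∀ i, Measurable (ξ i)) (hXm : ∀ i, Measurable (X i))
    (hξ : ∀ i, Measure.map (ξ i) ℙ = gaussianReal 0 (Real.toNNReal (σ ^ 2 * τ)))
    (hXval : ∀ i ω, X i ω = 1 ∨ X i ω = -1) (hXlaw : ∀ i, ℙ {ω | X i ω = 1} = 1 / 2)
    (k : ℕ ⊕ ℕ) : ∫ ω, Sum.elim ξ X k ω = 0 := by
  rcases k with j | i
  · exact (HasLaw.integral_eq ⟨(hξm j).aemeasurable, hξ j⟩).trans integral_id_gaussianReal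
  · exact integral_eq_zero_of_forall_eq_one_or_neg_one (hXm i) (hXval i) (hXlaw i)

theorem integral_sq_price_add_sub_price (hτ : 0 ≤ τ) (hξm : ∀ i, Measurable (ξ i))
    (hXm : ∀ i, Measurable (X i))
    (hξ : ∀ i, Measure.map (ξ i) ℙ = gaussianReal 0 (Real.toNNReal (σ ^ 2 * τ)))
    (hXval : ∀ i ω, X i ω = 1 ∨ X i ω = -1) (hXlaw : ∀ i, ℙ {ω | X i ω = 1} = 1 / 2)
    (hIndep : iIndepFun (Sum.elim ξ X) ℙ) (a : ℕ) {d : ℕ} (hd : 0 < d) :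
    ∫ ω, (price ξ X S (a + d) ω - price ξ X S a ω) ^ 2 = d * (σ ^ 2 * τ) + S ^ 2 / 2 := by
  have hXsq : ∀ i ω, X i ω ^ 2 = 1 := fun i ω => by rcases hXval i ω with h | h <;> simp [h]
  simp_rw [price_add_sub_price a hd]
  rw [integral_sq_sum_mul_of_iIndepFun hIndep (fun k _ => memLp_sumElim hξm hXm hξ hXval k)
    (fun k _ => integral_sumElim_eq_zero hξm hXm hξ hXval hXlaw k), sum_disjSum,
    sum_pair (by omega)]
  simp [(ProbabilityTheory.HasLaw.integral_sq_gaussianReal_zero ⟨(hξm _).aemeasurable, hξ _⟩),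
    hXsq, Real.coe_toNNReal _ (by positivity : 0 ≤ σ ^ 2 * τ)]
  ring

theorem integrable_sq_price_add_sub_price (hξm : ∀ i, Measurable (ξ i))
    (hXm : ∀ i, Measurable (X i))
    (hξ : ∀ i, Measure.map (ξ i) ℙ = gaussianReal 0 (Real.toNNReal (σ ^ 2 * τ)))
    (hXval : ∀ i ω, X i ω = 1 ∨ X i ω = -1) (a : ℕ) {d : ℕ} (hd : 0 < d) :
    Integrable (fun ω => (price ξ X S (a + d) ω - price ξ X S a ω) ^ 2) ℙ := by
  simp_rw [price_add_sub_price a hd]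
  exact (memLp_finsetSum _ fun k _ =>
    (memLp_sumElim hξm hXm hξ hXval k).const_mul _).integrable_sq

end GridModel

theorem Vhat_unbiased_zero_autocorrelation_general
    {Ω : Type*} [MeasureSpace Ω] [IsProbabilityMeasure (ℙ : Measure Ω)]
    (τ σ S : ℝ) (hτ : 0 < τ)
    (ξ X : ℕ → Ω → ℝ)
    (hξm : ∀ i, Measurable (ξ i)) (hXm : ∀ i, Measurable (X i))
    (hξ : ∀ i, Measure.map (ξ i) ℙ = gaussianReal 0 (Real.toNNReal (σ ^ 2 * τ)))
    (hXval : ∀ i ω, X i ω = 1 ∨ X i ω = -1)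
    (hXlaw : ∀ i, ℙ {ω | X i ω = 1} = 1 / 2)
    (hIndep : iIndepFun (Sum.elim ξ X) ℙ)
    (n L : ℕ) (hL : 1 ≤ L) (hLn : L < n) :
    (∫ ω, Vhat1 (price ξ X S) n L ω ∂ℙ = (L : ℝ) * τ * σ ^ 2 + S ^ 2 / 2) ∧
    (∫ ω, Vhat2 (price ξ X S) n L ω ∂ℙ = (L : ℝ) * τ * σ ^ 2 + S ^ 2 / 2) ∧
    (∫ ω, Vhat3 (price ξ X S) n L ω ∂ℙ = (L : ℝ) * τ * σ ^ 2 + S ^ 2 / 2) := by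
  have hint : ∀ a, Integrable (fun ω => (price ξ X S (a + L) ω - price ξ X S a ω) ^ 2) ℙ :=
    fun a => integrable_sq_price_add_sub_price hξm hXm hξ hXval a hL
  have hmean : ∀ a, ∫ ω, (price ξ X S (a + L) ω - price ξ X S a ω) ^ 2 =
      (L : ℝ) * τ * σ ^ 2 + S ^ 2 / 2 := fun a => by
    rw [integral_sq_price_add_sub_price hτ.le hξm hXm hξ hXval hXlaw hIndep a hL]
    ring
  refine ⟨?_, ?_, ?_⟩
  · exact integral_inv_mul_sum_of_integral_eq (by omega) (fun i _ => hint i) (fun i _ => hmean i)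
  · simp only [Vhat2, add_one_mul]
    exact integral_inv_mul_sum_of_integral_eq (Nat.div_pos (by omega) hL).ne'
      (fun i _ => hint _) (fun i _ => hmean _)
  · simp only [Vhat3, add_one_mul, ← add_assoc]
    exact integral_inv_mul_sum_of_integral_eq (Nat.div_pos hLn (by omega)).ne'
      (fun i _ => hint _) (fun i _ => hmean _)

/-- In the zero-autocorrelation grid market model, the empirical variances `V̂_v(n,L)`,
`v ∈ {1,2,3}`, are unbiased estimators of `V(Lτ) = Lτσ² + S²/2`. -/
theorem Vhat_unbiased_zero_autocorrelation
    {Ω : Type*} [MeasureSpace Ω] [IsProbabilityMeasure (ℙ : Measure Ω)]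
    (τ σ S : ℝ) (hτ : 0 < τ) (hσ : 0 < σ) (hS : 0 ≤ S)
    (ξ X : ℕ → Ω → ℝ)
    (hξm : ∀ i, Measurable (ξ i)) (hXm : ∀ i, Measurable (X i))
    (hξ : ∀ i, Measure.map (ξ i) ℙ = gaussianReal 0 (Real.toNNReal (σ ^ 2 * τ)))
    (hXval : ∀ i ω, X i ω = 1 ∨ X i ω = -1)
    (hXlaw : ∀ i, ℙ {ω | X i ω = 1} = 1 / 2)
    (hIndep : iIndepFun (Sum.elim ξ X) ℙ)
    (n L : ℕ) (hL : 1 ≤ L) (hLn : L < n) :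
    (∫ ω, Vhat1 (price ξ X S) n L ω ∂ℙ = (L : ℝ) * τ * σ ^ 2 + S ^ 2 / 2) ∧
    (∫ ω, Vhat2 (price ξ X S) n L ω ∂ℙ = (L : ℝ) * τ * σ ^ 2 + S ^ 2 / 2) ∧
    (∫ ω, Vhat3 (price ξ X S) n L ω ∂ℙ = (L : ℝ) * τ * σ ^ 2 + S ^ 2 / 2) :=
  Vhat_unbiased_zero_autocorrelation_general τ σ S hτ ξ X hξm hXm hξ hXval hXlaw hIndep n L hL hLn
end

section
/- In the zero-autocorrelation grid market model, for v ∈ {2,3} and all integers n, L with 1 ≤ L < n and k_v(n,L) ≥ 1, the variance of the empirical variance estimator satisfies exactly Var[V̂_v(n,L)] = (2σ⁴L²τ² + 2σ²LτS² + S⁴/4) / k_v(n,L). -/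
open MeasureTheory ProbabilityTheory Filter Finset
open scoped NNReal ENNReal Topology

/-!
Each squared increment entering `V̂₂` or `V̂₃` is `(G + A)²` over a block `[a, a + L]`, where
`G = Σ_{a ≤ t < a+L} ξ_t ~ N(0, Lσ²τ)` and `A = (S/2)(X_{a+L} - X_a)`. The Gaussian part of a block
is independent of everything outside the block, so it can be integrated out: against any
independent `W`, `(G + A)²` may be replaced by `Lσ²τ + A²`, and `(G + A)⁴` by
`3(Lσ²τ)² + 6Lσ²τ A² + A⁴`. What remains is the noise: `A² = (S²/2)(1 - X_a X_{a+L})` and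
`A⁴ = S² A²`, and the sign `X_a` is centred and independent of every other variable, so it drops
out of any product in which it occurs once. Hence squared increments of successive blocks are
uncorrelated even when the blocks share an endpoint (as for `V̂₂`), each has variance
`2(Lσ²τ)² + 2Lσ²τS² + S⁴/4`, and the variance of their mean is that divided by `k`.
-/

section GaussianMoments

open Real

lemma hasDerivAt_mul_exp_half_mul_sq {p : ℝ → ℝ} {p' t : ℝ} (v : ℝ) (hp : HasDerivAt p p' t) :
    HasDerivAt (fun t ↦ p t * rexp (v * t ^ 2 / 2))
      ((p' + v * t * p t) * rexp (v * t ^ 2 / 2)) t := by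
  have h : HasDerivAt (fun t ↦ v * t ^ 2 / 2) (v * t) t :=
    (((hasDerivAt_pow 2 t).const_mul v).div_const 2).congr_deriv (by ring)
  exact (hp.mul h.exp).congr_deriv (by ring)

lemma integral_pow_gaussianReal_eq_iteratedDeriv (v : ℝ≥0) (n : ℕ) :
    ∫ x, x ^ n ∂gaussianReal 0 v = iteratedDeriv n (fun t ↦ rexp (v * t ^ 2 / 2)) 0 := by
  have h := iteratedDeriv_mgf_zero (X := fun x ↦ x) (μ := gaussianReal 0 v)
    (by simp [integrableExpSet_fun_id_gaussianReal]) n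
  rw [mgf_fun_id_gaussianReal] at h
  simpa using h.symm

lemma integral_pow_gaussianReal (v : ℝ≥0) :
    ∫ x, x ∂gaussianReal 0 v = 0 ∧ ∫ x, x ^ 2 ∂gaussianReal 0 v = v ∧
      ∫ x, x ^ 3 ∂gaussianReal 0 v = 0 ∧ ∫ x, x ^ 4 ∂gaussianReal 0 v = 3 * (v : ℝ) ^ 2 := by
  set f : ℝ → ℝ := fun t ↦ rexp (v * t ^ 2 / 2)
  have deriv_mul_f (p p' : ℝ → ℝ) (hp : ∀ t, HasDerivAt p (p' t) t) :
      deriv (fun t ↦ p t * f t) = fun t ↦ (p' t + v * t * p t) * f t :=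
    funext fun t ↦ (hasDerivAt_mul_exp_half_mul_sq v (hp t)).deriv
  have d1 : deriv f = fun t ↦ (v * t) * f t := by
    simpa using deriv_mul_f (fun _ ↦ 1) (fun _ ↦ 0) (fun _ ↦ hasDerivAt_const _ _)
  have d2 : deriv (fun t ↦ (v * t) * f t) = fun t ↦ (v + v ^ 2 * t ^ 2) * f t := by
    rw [deriv_mul_f (fun t ↦ v * t) (fun _ ↦ v)
      (fun t ↦ by simpa using (hasDerivAt_id t).const_mul (v : ℝ))]
    ext t; ring
  have d3 : deriv (fun t ↦ (v + v ^ 2 * t ^ 2) * f t)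
      = fun t ↦ (3 * v ^ 2 * t + v ^ 3 * t ^ 3) * f t := by
    rw [deriv_mul_f (fun t ↦ v + v ^ 2 * t ^ 2) (fun t ↦ v ^ 2 * (2 * t))
      (fun t ↦ by simpa using ((hasDerivAt_pow 2 t).const_mul ((v : ℝ) ^ 2)).const_add (v : ℝ))]
    ext t; ring
  have d4 : deriv (fun t ↦ (3 * v ^ 2 * t + v ^ 3 * t ^ 3) * f t)
      = fun t ↦ (3 * v ^ 2 + 6 * v ^ 3 * t ^ 2 + v ^ 4 * t ^ 4) * f t := by
    rw [deriv_mul_f (fun t ↦ 3 * v ^ 2 * t + v ^ 3 * t ^ 3)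
      (fun t ↦ 3 * v ^ 2 + v ^ 3 * (3 * t ^ 2))
      (fun t ↦ by
        simpa using ((hasDerivAt_id t).const_mul (3 * (v : ℝ) ^ 2)).fun_add
          ((hasDerivAt_pow 3 t).const_mul ((v : ℝ) ^ 3)))]
    ext t; ring
  have h1 := integral_pow_gaussianReal_eq_iteratedDeriv v 1
  have h2 := integral_pow_gaussianReal_eq_iteratedDeriv v 2
  have h3 := integral_pow_gaussianReal_eq_iteratedDeriv v 3
  have h4 := integral_pow_gaussianReal_eq_iteratedDeriv v 4
  simp only [iteratedDeriv_succ', iteratedDeriv_zero, pow_one] at h1 h2 h3 h4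
  rw [d1] at h1 h2 h3 h4
  rw [d2] at h2 h3 h4
  rw [d3] at h3 h4
  rw [d4] at h4
  refine ⟨?_, ?_, ?_, ?_⟩ <;> simp_all [f]

end GaussianMoments

section Independence

variable {Ω ι β γ δ : Type*} {mΩ : MeasurableSpace Ω} {μ : Measure Ω} [mβ : MeasurableSpace β]
  [MeasurableSpace γ] [MeasurableSpace δ] {f : ι → Ω → β}

lemma measurable_iSup_comap_of_mem {s : Set ι} {i : ι} (hi : i ∈ s) :
    Measurable[⨆ j ∈ s, mβ.comap (f j)] (f i) :=
  Measurable.of_comap_le (le_iSup₂ (f := fun j (_ : j ∈ s) ↦ mβ.comap (f j)) i hi)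

lemma iIndepFun.indepFun_of_measurable_iSup (h : iIndepFun f μ) (hf : ∀ i, Measurable (f i))
    {s t : Set ι} (hst : Disjoint s t) {F : Ω → γ} {H : Ω → δ}
    (hF : Measurable[⨆ i ∈ s, mβ.comap (f i)] F) (hH : Measurable[⨆ i ∈ t, mβ.comap (f i)] H) :
    IndepFun F H μ := by
  rw [IndepFun_iff_Indep]
  exact indep_of_indep_of_le_right (indep_of_indep_of_le_left
    (indep_iSup_of_disjoint (fun i ↦ (hf i).comap_le) h.iIndep hst) hF.comap_le) hH.comap_le

end Independence

section IntegrateOutGaussian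

variable {Ω : Type*} {mΩ : MeasurableSpace Ω} {μ : Measure Ω} {G A W : Ω → ℝ} {v : ℝ≥0}

lemma integrable_pow_of_memLp [IsFiniteMeasure μ] {f : Ω → ℝ} {p k : ℕ} (hf : MemLp f p μ)
    (hk : k ≤ p) : Integrable (fun ω ↦ f ω ^ k) μ :=
  (integrable_norm_pow_of_le hf.1 hk hf.integrable_norm_pow').mono' (hf.1.pow k)
    (ae_of_all _ fun ω ↦ by simp [norm_pow])

lemma memLp_of_map_eq_gaussianReal (hGm : Measurable G) (hG : μ.map G = gaussianReal 0 v)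
    (p : ℕ) : MemLp G p μ := by
  have h : MemLp id p (μ.map G) := hG ▸ memLp_id_gaussianReal' _ (by simp)
  exact (memLp_map_measure_iff aestronglyMeasurable_id hGm.aemeasurable).1 h

lemma integral_pow_of_map_eq_gaussianReal (hGm : Measurable G) (hG : μ.map G = gaussianReal 0 v)
    (n : ℕ) : ∫ ω, G ω ^ n ∂μ = ∫ x, x ^ n ∂gaussianReal 0 v := by
  rw [← hG, integral_map hGm.aemeasurable (by fun_prop)]

lemma integral_add_sq_mul_of_indepFun [IsProbabilityMeasure μ] (hGm : Measurable G)
    (hG : μ.map G = gaussianReal 0 v)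
    (hind : IndepFun G (fun ω ↦ (A ω, W ω)) μ) (hW : Integrable W μ)
    (hAW : Integrable (fun ω ↦ A ω * W ω) μ) (hA2W : Integrable (fun ω ↦ A ω ^ 2 * W ω) μ) :
    ∫ ω, (G ω + A ω) ^ 2 * W ω ∂μ = ∫ ω, (v + A ω ^ 2) * W ω ∂μ := by
  obtain ⟨hG1, hG2, -, -⟩ := integral_pow_gaussianReal v
  have hG2W : IndepFun (fun ω ↦ G ω ^ 2) W μ :=
    hind.comp (measurable_id.pow_const 2) measurable_snd
  have hGAW : IndepFun G (fun ω ↦ A ω * W ω) μ :=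
    hind.comp measurable_id (measurable_fst.mul measurable_snd)
  have iG1 : Integrable G μ := by
    simpa using integrable_pow_of_memLp (k := 1) (memLp_of_map_eq_gaussianReal hGm hG 1) le_rfl
  have iG2 := integrable_pow_of_memLp (memLp_of_map_eq_gaussianReal hGm hG 2) le_rfl
  have iG2W : Integrable (fun ω ↦ G ω ^ 2 * W ω) μ := hG2W.integrable_mul iG2 hW
  have iGAW : Integrable (fun ω ↦ G ω * (A ω * W ω)) μ := hGAW.integrable_mul iG1 hAW
  have e1 : ∫ ω, G ω ^ 2 * W ω ∂μ = v * ∫ ω, W ω ∂μ := by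
    rw [hG2W.integral_fun_mul_eq_mul_integral iG2.1 hW.1,
      integral_pow_of_map_eq_gaussianReal hGm hG, hG2]
  have e2 : ∫ ω, G ω * (A ω * W ω) ∂μ = 0 := by
    have hGmean : ∫ ω, G ω ∂μ = 0 := by
      simpa [hG1] using integral_pow_of_map_eq_gaussianReal hGm hG 1
    rw [hGAW.integral_fun_mul_eq_mul_integral iG1.1 hAW.1, hGmean, zero_mul]
  calc ∫ ω, (G ω + A ω) ^ 2 * W ω ∂μ
      = ∫ ω, G ω ^ 2 * W ω + (2 * (G ω * (A ω * W ω)) + A ω ^ 2 * W ω) ∂μ :=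
        integral_congr_ae (ae_of_all _ fun ω ↦ by ring)
    _ = v * ∫ ω, W ω ∂μ + ∫ ω, A ω ^ 2 * W ω ∂μ := by
        have i2GAW : Integrable (fun ω ↦ 2 * (G ω * (A ω * W ω))) μ := iGAW.const_mul 2
        rw [integral_add iG2W (i2GAW.fun_add hA2W), integral_add i2GAW hA2W, integral_const_mul,
          e1, e2]
        ring
    _ = ∫ ω, (v + A ω ^ 2) * W ω ∂μ := by
        rw [← integral_const_mul, ← integral_add (hW.const_mul _) hA2W]
        exact integral_congr_ae (ae_of_all _ fun ω ↦ by ring)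

lemma integral_add_pow_four_of_indepFun [IsProbabilityMeasure μ] (hGm : Measurable G)
    (hG : μ.map G = gaussianReal 0 v)
    (hind : IndepFun G A μ) (hA : MemLp A 4 μ) :
    ∫ ω, (G ω + A ω) ^ 4 ∂μ
      = 3 * (v : ℝ) ^ 2 + 6 * v * ∫ ω, A ω ^ 2 ∂μ + ∫ ω, A ω ^ 4 ∂μ := by
  obtain ⟨hG1, hG2, hG3, hG4⟩ := integral_pow_gaussianReal v
  have hGk := memLp_of_map_eq_gaussianReal hGm hG 4
  have term (k : ℕ) (hk : k ≤ 4) :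
      Integrable (fun ω ↦ G ω ^ k * A ω ^ (4 - k) * (Nat.choose 4 k : ℝ)) μ ∧
      ∫ ω, G ω ^ k * A ω ^ (4 - k) * (Nat.choose 4 k : ℝ) ∂μ
        = (∫ x, x ^ k ∂gaussianReal 0 v) * (∫ ω, A ω ^ (4 - k) ∂μ) * Nat.choose 4 k := by
    have hk' : IndepFun (fun ω ↦ G ω ^ k) (fun ω ↦ A ω ^ (4 - k)) μ :=
      hind.comp (measurable_id.pow_const k) (measurable_id.pow_const (4 - k))
    have iG := integrable_pow_of_memLp hGk hk
    have iA := integrable_pow_of_memLp hA (Nat.sub_le 4 k)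
    refine ⟨(hk'.integrable_mul iG iA).mul_const _, ?_⟩
    rw [integral_mul_const, hk'.integral_fun_mul_eq_mul_integral iG.1 iA.1,
      integral_pow_of_map_eq_gaussianReal hGm hG]
  simp_rw [add_pow]
  rw [integral_finsetSum _ fun k hk ↦ (term k (by simp at hk; omega)).1,
    Finset.sum_congr rfl fun k hk ↦ (term k (by simp at hk; omega)).2]
  norm_num [Finset.sum_range_succ, Nat.choose, hG1, hG2, hG3, hG4]
  ring

lemma iIndepFun.map_sum_eq_gaussianReal [IsProbabilityMeasure μ] {ι : Type*} {ξ : ι → Ω → ℝ}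
    (h : iIndepFun ξ μ)
    (hm : ∀ i, Measurable (ξ i)) (hξ : ∀ i, μ.map (ξ i) = gaussianReal 0 v) (s : Finset ι) :
    μ.map (fun ω ↦ ∑ i ∈ s, ξ i ω) = gaussianReal 0 (#s * v) := by
  classical
  induction s using Finset.induction_on with
  | empty => simp [gaussianReal_zero_var]
  | insert a s ha ih =>
    have hsum : (fun ω ↦ ∑ i ∈ insert a s, ξ i ω) = (∑ i ∈ s, ξ i) + ξ a := by
      ext ω; simp [Finset.sum_insert ha, add_comm]
    rw [hsum, gaussianReal_add_gaussianReal_of_indepFun (h.indepFun_finsetSum_of_notMem hm ha)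
      (by simpa [← Finset.sum_apply] using ih) (hξ a), Finset.card_insert_of_notMem ha]
    simp [add_mul]

end IntegrateOutGaussian

section Model

variable {Ω γ δ : Type*} {mΩ : MeasurableSpace Ω} [MeasurableSpace γ] [MeasurableSpace δ]

abbrev generatedSigma (ξ X : ℕ → Ω → ℝ) (A B : Set ℕ) : MeasurableSpace Ω :=
  ⨆ i ∈ Sum.inl '' A ∪ Sum.inr '' B, MeasurableSpace.comap (Sum.elim ξ X i) inferInstance

structure IsGridMarketModel (μ : Measure Ω) (ξ X : ℕ → Ω → ℝ) (c : ℝ≥0) : Prop where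
  indep : iIndepFun (Sum.elim ξ X) μ
  measurable_ξ : ∀ i, Measurable (ξ i)
  measurable_X : ∀ i, Measurable (X i)
  map_ξ : ∀ i, μ.map (ξ i) = gaussianReal 0 c
  X_eq_one_or : ∀ i ω, X i ω = 1 ∨ X i ω = -1
  measure_X_eq_one : ∀ i, μ {ω | X i ω = 1} = 1 / 2

variable {μ : Measure Ω} {ξ X : ℕ → Ω → ℝ} {c : ℝ≥0} {A B A' B' : Set ℕ}

lemma measurable_ξ_generatedSigma {t : ℕ} (ht : t ∈ A) :
    Measurable[generatedSigma ξ X A B] (ξ t) :=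
  measurable_iSup_comap_of_mem (f := Sum.elim ξ X) (i := .inl t) (Or.inl ⟨t, ht, rfl⟩)

lemma measurable_X_generatedSigma {t : ℕ} (ht : t ∈ B) :
    Measurable[generatedSigma ξ X A B] (X t) :=
  measurable_iSup_comap_of_mem (f := Sum.elim ξ X) (i := .inr t) (Or.inr ⟨t, ht, rfl⟩)

lemma IsGridMarketModel.indepFun (hM : IsGridMarketModel μ ξ X c) (hA : Disjoint A A')
    (hB : Disjoint B B') {F : Ω → γ} {H : Ω → δ} (hF : Measurable[generatedSigma ξ X A B] F)
    (hH : Measurable[generatedSigma ξ X A' B'] H) : IndepFun F H μ := by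
  refine iIndepFun.indepFun_of_measurable_iSup hM.indep
    (by rintro (i | i); exacts [hM.measurable_ξ i, hM.measurable_X i]) ?_ hF hH
  rw [Set.disjoint_left]
  rintro _ (⟨t, ht, rfl⟩ | ⟨t, ht, rfl⟩) (⟨u, hu, hut⟩ | ⟨u, hu, hut⟩) <;> cases hut
  exacts [Set.disjoint_left.1 hA ht hu, Set.disjoint_left.1 hB ht hu]

noncomputable def gaussianIncrement (ξ : ℕ → Ω → ℝ) (a L : ℕ) (ω : Ω) : ℝ :=
  ∑ t ∈ Ico a (a + L), ξ t ω

noncomputable def spreadIncrement (X : ℕ → Ω → ℝ) (S : ℝ) (a L : ℕ) (ω : Ω) : ℝ :=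
  S / 2 * (X (a + L) ω - X a ω)

variable {S : ℝ} {a b L : ℕ}

lemma price_add_sub_price_s5 (ω : Ω) :
    price ξ X S (a + L) ω - price ξ X S a ω
      = gaussianIncrement ξ a L ω + spreadIncrement X S a L ω := by
  rw [price, price, gaussianIncrement, spreadIncrement, ← Finset.sum_range_add_sum_Ico _
    (Nat.le_add_right a L)]
  ring

lemma measurable_gaussianIncrement_generatedSigma (h : Set.Ico a (a + L) ⊆ A) :
    Measurable[generatedSigma ξ X A B] (gaussianIncrement ξ a L) :=
  Finset.measurable_sum _ fun t ht ↦ measurable_ξ_generatedSigma (h (by simpa using ht))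

lemma measurable_spreadIncrement_generatedSigma (ha : a ∈ B) (haL : a + L ∈ B) :
    Measurable[generatedSigma ξ X A B] (spreadIncrement X S a L) :=
  ((measurable_X_generatedSigma haL).sub (measurable_X_generatedSigma ha)).const_mul _

namespace IsGridMarketModel

lemma measurable_gaussianIncrement (hM : IsGridMarketModel μ ξ X c) :
    Measurable (gaussianIncrement ξ a L) :=
  Finset.measurable_sum _ fun t _ ↦ hM.measurable_ξ t

lemma map_gaussianIncrement [IsProbabilityMeasure μ] (hM : IsGridMarketModel μ ξ X c) :
    μ.map (gaussianIncrement ξ a L) = gaussianReal 0 (L * c) := by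
  have hξ : iIndepFun ξ μ := iIndepFun.precomp (g := Sum.inl) Sum.inl_injective hM.indep
  have h := iIndepFun.map_sum_eq_gaussianReal hξ hM.measurable_ξ hM.map_ξ (Ico a (a + L))
  rwa [Nat.card_Ico, Nat.add_sub_cancel_left] at h

lemma abs_X (hM : IsGridMarketModel μ ξ X c) (t : ℕ) (ω : Ω) : |X t ω| = 1 := by
  rcases hM.X_eq_one_or t ω with h | h <;> simp [h]

lemma integral_X [IsProbabilityMeasure μ] (hM : IsGridMarketModel μ ξ X c) (t : ℕ) :
    ∫ ω, X t ω ∂μ = 0 := by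
  have hE : MeasurableSet {ω | X t ω = 1} := hM.measurable_X t (measurableSet_singleton 1)
  have hX : X t = fun ω ↦ Set.indicator {ω | X t ω = 1} (fun _ ↦ (2 : ℝ)) ω - 1 := by
    ext ω
    rcases hM.X_eq_one_or t ω with h | h <;> simp [Set.indicator, h] <;> norm_num
  rw [hX, integral_sub ((integrable_const 2).indicator hE) (integrable_const 1),
    integral_indicator_const _ hE, measureReal_def, hM.measure_X_eq_one]
  norm_num

lemma integral_X_mul_eq_zero [IsProbabilityMeasure μ] (hM : IsGridMarketModel μ ξ X c)
    {H : Ω → ℝ} (hH : Measurable[generatedSigma ξ X Set.univ {a}ᶜ] H) (hHi : Integrable H μ) :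
    ∫ ω, X a ω * H ω ∂μ = 0 := by
  have hind : IndepFun (X a) H μ :=
    hM.indepFun (Set.empty_disjoint _) disjoint_compl_right
      (measurable_X_generatedSigma (A := ∅) (Set.mem_singleton a)) hH
  have hXa : Integrable (X a) μ :=
    Integrable.of_bound (hM.measurable_X a).aestronglyMeasurable 1
      (ae_of_all _ fun ω ↦ (hM.abs_X a ω).le)
  rw [hind.integral_fun_mul_eq_mul_integral hXa.1 hHi.1, hM.integral_X, zero_mul]

lemma measurable_spreadIncrement (hM : IsGridMarketModel μ ξ X c) :
    Measurable (spreadIncrement X S a L) :=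
  ((hM.measurable_X _).sub (hM.measurable_X _)).const_mul _

lemma abs_spreadIncrement_le (hM : IsGridMarketModel μ ξ X c) (ω : Ω) :
    |spreadIncrement X S a L ω| ≤ |S| := by
  rcases hM.X_eq_one_or a ω with h | h <;> rcases hM.X_eq_one_or (a + L) ω with h' | h' <;>
    simp [spreadIncrement, h, h', abs_mul, abs_div] <;> norm_num

lemma spreadIncrement_sq (hM : IsGridMarketModel μ ξ X c) (ω : Ω) :
    spreadIncrement X S a L ω ^ 2 = S ^ 2 / 2 - S ^ 2 / 2 * (X a ω * X (a + L) ω) := by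
  rcases hM.X_eq_one_or a ω with h | h <;> rcases hM.X_eq_one_or (a + L) ω with h' | h' <;>
    simp [spreadIncrement, h, h'] <;> ring

lemma spreadIncrement_pow_four (hM : IsGridMarketModel μ ξ X c) (ω : Ω) :
    spreadIncrement X S a L ω ^ 4 = S ^ 2 * spreadIncrement X S a L ω ^ 2 := by
  rcases hM.X_eq_one_or a ω with h | h <;> rcases hM.X_eq_one_or (a + L) ω with h' | h' <;>
    simp [spreadIncrement, h, h'] <;> ring

lemma integral_add_spreadIncrement_sq_mul [IsProbabilityMeasure μ]
    (hM : IsGridMarketModel μ ξ X c) (hL : 0 < L) (v : ℝ) {W : Ω → ℝ}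
    (hW : Measurable[generatedSigma ξ X Set.univ {a}ᶜ] W) (hWi : Integrable W μ) :
    ∫ ω, (v + spreadIncrement X S a L ω ^ 2) * W ω ∂μ = (v + S ^ 2 / 2) * ∫ ω, W ω ∂μ := by
  have hH : Measurable[generatedSigma ξ X Set.univ {a}ᶜ] (fun ω ↦ X (a + L) ω * W ω) :=
    (measurable_X_generatedSigma (by simp; omega)).mul hW
  have hHi : Integrable (fun ω ↦ X (a + L) ω * W ω) μ :=
    hWi.bdd_mul (hM.measurable_X _).aestronglyMeasurable (ae_of_all _ fun ω ↦ (hM.abs_X _ ω).le)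
  have hXHi : Integrable (fun ω ↦ S ^ 2 / 2 * (X a ω * (X (a + L) ω * W ω))) μ :=
    (hHi.bdd_mul (hM.measurable_X _).aestronglyMeasurable
      (ae_of_all _ fun ω ↦ (hM.abs_X _ ω).le)).const_mul _
  calc ∫ ω, (v + spreadIncrement X S a L ω ^ 2) * W ω ∂μ
      = ∫ ω, (v + S ^ 2 / 2) * W ω - S ^ 2 / 2 * (X a ω * (X (a + L) ω * W ω)) ∂μ := by
        refine integral_congr_ae (ae_of_all _ fun ω ↦ ?_)
        simp only [hM.spreadIncrement_sq]
        ring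
    _ = (v + S ^ 2 / 2) * ∫ ω, W ω ∂μ := by
        rw [integral_sub (hWi.const_mul _) hXHi, integral_const_mul, integral_const_mul,
          hM.integral_X_mul_eq_zero hH hHi, mul_zero, sub_zero]

lemma integral_spreadIncrement_sq [IsProbabilityMeasure μ] (hM : IsGridMarketModel μ ξ X c)
    (hL : 0 < L) : ∫ ω, spreadIncrement X S a L ω ^ 2 ∂μ = S ^ 2 / 2 := by
  simpa using hM.integral_add_spreadIncrement_sq_mul (S := S) hL 0 (W := fun _ ↦ 1)
    measurable_const (integrable_const 1)

lemma integral_spreadIncrement_pow_four [IsProbabilityMeasure μ]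
    (hM : IsGridMarketModel μ ξ X c) (hL : 0 < L) :
    ∫ ω, spreadIncrement X S a L ω ^ 4 ∂μ = S ^ 4 / 2 := by
  simp_rw [hM.spreadIncrement_pow_four]
  rw [integral_const_mul, hM.integral_spreadIncrement_sq hL]
  ring

lemma integrable_spreadIncrement_pow_mul (hM : IsGridMarketModel μ ξ X c) (k : ℕ) {W : Ω → ℝ}
    (hW : Integrable W μ) : Integrable (fun ω ↦ spreadIncrement X S a L ω ^ k * W ω) μ :=
  hW.bdd_mul (hM.measurable_spreadIncrement.pow_const k).aestronglyMeasurable (ae_of_all _ fun ω ↦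
    by simpa [abs_pow] using pow_le_pow_left₀ (abs_nonneg _) (hM.abs_spreadIncrement_le ω) k)

lemma indepFun_gaussianIncrement (hM : IsGridMarketModel μ ξ X c) {F : Ω → γ}
    (hF : Measurable[generatedSigma ξ X (Set.Ico a (a + L))ᶜ Set.univ] F) :
    IndepFun (gaussianIncrement ξ a L) F μ :=
  hM.indepFun disjoint_compl_right (Set.empty_disjoint _)
    (measurable_gaussianIncrement_generatedSigma (B := ∅) subset_rfl) hF

lemma memLp_increment [IsProbabilityMeasure μ] (hM : IsGridMarketModel μ ξ X c) (p : ℕ) :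
    MemLp (fun ω ↦ gaussianIncrement ξ a L ω + spreadIncrement X S a L ω) p μ :=
  (memLp_of_map_eq_gaussianReal hM.measurable_gaussianIncrement hM.map_gaussianIncrement p).add
    (MemLp.of_bound hM.measurable_spreadIncrement.aestronglyMeasurable |S|
      (ae_of_all _ fun ω ↦ by simpa using hM.abs_spreadIncrement_le ω))

lemma memLp_increment_sq [IsProbabilityMeasure μ] (hM : IsGridMarketModel μ ξ X c) :
    MemLp (fun ω ↦ (gaussianIncrement ξ a L ω + spreadIncrement X S a L ω) ^ 2) 2 μ := by
  refine (memLp_two_iff_integrable_sq ((hM.memLp_increment 2).1.pow 2)).2 ?_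
  simpa only [Pi.pow_apply, ← pow_mul] using
    integrable_pow_of_memLp (hM.memLp_increment (S := S) (a := a) (L := L) 4) le_rfl

lemma integral_increment_sq [IsProbabilityMeasure μ] (hM : IsGridMarketModel μ ξ X c)
    (hL : 0 < L) :
    ∫ ω, (gaussianIncrement ξ a L ω + spreadIncrement X S a L ω) ^ 2 ∂μ = L * c + S ^ 2 / 2 := by
  have hA : Measurable[generatedSigma ξ X (Set.Ico a (a + L))ᶜ Set.univ]
      (spreadIncrement X S a L) :=
    measurable_spreadIncrement_generatedSigma (Set.mem_univ _) (Set.mem_univ _)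
  have h := integral_add_sq_mul_of_indepFun (W := fun _ ↦ 1) hM.measurable_gaussianIncrement
    hM.map_gaussianIncrement (hM.indepFun_gaussianIncrement (hA.prodMk measurable_const))
    (integrable_const 1)
    (by simpa using hM.integrable_spreadIncrement_pow_mul 1 (integrable_const 1))
    (hM.integrable_spreadIncrement_pow_mul 2 (integrable_const 1))
  rw [hM.integral_add_spreadIncrement_sq_mul hL _ measurable_const (integrable_const 1)] at h
  simpa using h

lemma integral_increment_pow_four [IsProbabilityMeasure μ] (hM : IsGridMarketModel μ ξ X c)
    (hL : 0 < L) :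
    ∫ ω, (gaussianIncrement ξ a L ω + spreadIncrement X S a L ω) ^ 4 ∂μ
      = 3 * (L * c) ^ 2 + 3 * (L * c) * S ^ 2 + S ^ 4 / 2 := by
  rw [integral_add_pow_four_of_indepFun hM.measurable_gaussianIncrement hM.map_gaussianIncrement
    (hM.indepFun_gaussianIncrement (measurable_spreadIncrement_generatedSigma (Set.mem_univ _)
      (Set.mem_univ _)))
    (MemLp.of_bound hM.measurable_spreadIncrement.aestronglyMeasurable |S|
      (ae_of_all _ fun ω ↦ by simpa using hM.abs_spreadIncrement_le ω)),
    hM.integral_spreadIncrement_sq hL, hM.integral_spreadIncrement_pow_four hL]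
  push_cast
  ring

lemma integral_increment_sq_mul_increment_sq [IsProbabilityMeasure μ]
    (hM : IsGridMarketModel μ ξ X c) (hL : 0 < L) (hab : a + L ≤ b) :
    ∫ ω, (gaussianIncrement ξ a L ω + spreadIncrement X S a L ω) ^ 2
        * (gaussianIncrement ξ b L ω + spreadIncrement X S b L ω) ^ 2 ∂μ
      = (L * c + S ^ 2 / 2) ^ 2 := by
  set W := fun ω ↦ (gaussianIncrement ξ b L ω + spreadIncrement X S b L ω) ^ 2
  have hWG : Measurable[generatedSigma ξ X (Set.Ico a (a + L))ᶜ Set.univ] W :=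
    ((measurable_gaussianIncrement_generatedSigma fun t ht ↦ by simp at ht ⊢; omega).add
      (measurable_spreadIncrement_generatedSigma (Set.mem_univ _) (Set.mem_univ _))).pow_const 2
  have hWX : Measurable[generatedSigma ξ X Set.univ {a}ᶜ] W :=
    ((measurable_gaussianIncrement_generatedSigma (Set.subset_univ _)).add
      (measurable_spreadIncrement_generatedSigma (by simp; omega) (by simp; omega))).pow_const 2
  have hWi : Integrable W μ := integrable_pow_of_memLp (hM.memLp_increment 2) le_rfl
  have hA : Measurable[generatedSigma ξ X (Set.Ico a (a + L))ᶜ Set.univ]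
      (spreadIncrement X S a L) :=
    measurable_spreadIncrement_generatedSigma (Set.mem_univ _) (Set.mem_univ _)
  rw [integral_add_sq_mul_of_indepFun hM.measurable_gaussianIncrement hM.map_gaussianIncrement
      (hM.indepFun_gaussianIncrement (hA.prodMk hWG)) hWi
      (by simpa using hM.integrable_spreadIncrement_pow_mul 1 hWi)
      (hM.integrable_spreadIncrement_pow_mul 2 hWi),
    hM.integral_add_spreadIncrement_sq_mul hL _ hWX hWi, hM.integral_increment_sq hL]
  push_cast
  ring

lemma covariance_increment_sq [IsProbabilityMeasure μ] (hM : IsGridMarketModel μ ξ X c)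
    (hL : 0 < L) (hab : a + L ≤ b) :
    cov[fun ω ↦ (gaussianIncrement ξ a L ω + spreadIncrement X S a L ω) ^ 2,
      fun ω ↦ (gaussianIncrement ξ b L ω + spreadIncrement X S b L ω) ^ 2; μ] = 0 := by
  rw [covariance_eq_sub hM.memLp_increment_sq hM.memLp_increment_sq]
  simp only [Pi.mul_apply]
  rw [hM.integral_increment_sq_mul_increment_sq hL hab, hM.integral_increment_sq hL,
    hM.integral_increment_sq hL]
  ring

lemma variance_increment_sq [IsProbabilityMeasure μ] (hM : IsGridMarketModel μ ξ X c)
    (hL : 0 < L) :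
    Var[fun ω ↦ (gaussianIncrement ξ a L ω + spreadIncrement X S a L ω) ^ 2; μ]
      = 2 * (L * c) ^ 2 + 2 * (L * c) * S ^ 2 + S ^ 4 / 4 := by
  rw [variance_eq_sub hM.memLp_increment_sq]
  simp only [Pi.pow_apply, ← pow_mul]
  rw [hM.integral_increment_pow_four hL, hM.integral_increment_sq hL]
  ring

theorem variance_average_sq_increments [IsProbabilityMeasure μ] (hM : IsGridMarketModel μ ξ X c)
    (hL : 0 < L) (a : ℕ → ℕ) (hstep : ∀ i, a i + L ≤ a (i + 1)) (k : ℕ) :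
    Var[fun ω ↦ (k : ℝ)⁻¹ * ∑ i ∈ range k, (price ξ X S (a i + L) ω - price ξ X S (a i) ω) ^ 2; μ]
      = (2 * (L * c) ^ 2 + 2 * (L * c) * S ^ 2 + S ^ 4 / 4) / k := by
  have hblocks (i j : ℕ) (hij : i < j) : a i + L ≤ a j := by
    induction hij with
    | refl => exact hstep i
    | step _ ih => exact ih.trans ((Nat.le_add_right _ _).trans (hstep _))
  have hcov (i j : ℕ) :
      cov[fun ω ↦ (gaussianIncrement ξ (a i) L ω + spreadIncrement X S (a i) L ω) ^ 2,
        fun ω ↦ (gaussianIncrement ξ (a j) L ω + spreadIncrement X S (a j) L ω) ^ 2; μ]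
      = if i = j then 2 * (L * c) ^ 2 + 2 * (L * c) * S ^ 2 + S ^ 4 / 4 else 0 := by
    rcases lt_trichotomy i j with hij | rfl | hij
    · rw [if_neg hij.ne, hM.covariance_increment_sq hL (hblocks i j hij)]
    · rw [if_pos rfl, covariance_self hM.memLp_increment_sq.aemeasurable,
        hM.variance_increment_sq hL]
    · rw [if_neg hij.ne', covariance_comm, hM.covariance_increment_sq hL (hblocks j i hij)]
  simp_rw [price_add_sub_price_s5]
  rw [variance_const_mul, variance_fun_sum' fun i _ ↦ hM.memLp_increment_sq]
  simp only [hcov, Finset.sum_ite_eq, Finset.sum_ite_mem, Finset.inter_self, Finset.sum_const,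
    Finset.card_range, nsmul_eq_mul]
  rcases eq_or_ne (k : ℝ) 0 with hk | hk
  · simp [hk]
  · field_simp

end IsGridMarketModel

end Model

theorem Vhat_variance_nonoverlapping_zero_autocorrelation_general
    {Ω : Type*} [MeasureSpace Ω] [IsProbabilityMeasure (ℙ : Measure Ω)]
    (τ σ S : ℝ) (hτ : 0 < τ)
    (ξ X : ℕ → Ω → ℝ)
    (hξm : ∀ i, Measurable (ξ i)) (hXm : ∀ i, Measurable (X i))
    (hξ : ∀ i, Measure.map (ξ i) ℙ = gaussianReal 0 (Real.toNNReal (σ ^ 2 * τ)))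
    (hXval : ∀ i ω, X i ω = 1 ∨ X i ω = -1)
    (hXlaw : ∀ i, ℙ {ω | X i ω = 1} = 1 / 2)
    (hIndep : iIndepFun (Sum.elim ξ X) ℙ)
    (n L : ℕ) (hL : 1 ≤ L) :
    (variance (Vhat2 (price ξ X S) n L) ℙ
      = (2 * σ ^ 4 * (L : ℝ) ^ 2 * τ ^ 2 + 2 * σ ^ 2 * (L : ℝ) * τ * S ^ 2 + S ^ 4 / 4)
        / (((n - 1) / L : ℕ) : ℝ)) ∧
    (variance (Vhat3 (price ξ X S) n L) ℙ
      = (2 * σ ^ 4 * (L : ℝ) ^ 2 * τ ^ 2 + 2 * σ ^ 2 * (L : ℝ) * τ * S ^ 2 + S ^ 4 / 4)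
        / ((n / (L + 1) : ℕ) : ℝ)) := by
  have hM : IsGridMarketModel ℙ ξ X (σ ^ 2 * τ).toNNReal := ⟨hIndep, hξm, hXm, hξ, hXval, hXlaw⟩
  have hc : ((σ ^ 2 * τ).toNNReal : ℝ) = σ ^ 2 * τ := Real.coe_toNNReal _ (by positivity)
  have hV : 2 * σ ^ 4 * (L : ℝ) ^ 2 * τ ^ 2 + 2 * σ ^ 2 * (L : ℝ) * τ * S ^ 2 + S ^ 4 / 4
      = 2 * (L * (σ ^ 2 * τ).toNNReal) ^ 2 + 2 * (L * (σ ^ 2 * τ).toNNReal) * S ^ 2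
        + S ^ 4 / 4 := by
    rw [hc]; ring
  rw [hV]
  constructor
  · convert hM.variance_average_sq_increments (S := S) hL (fun i ↦ i * L)
      (fun i ↦ by rw [add_one_mul]) ((n - 1) / L) using 3 with ω
    simp only [Vhat2, add_one_mul]
  · convert hM.variance_average_sq_increments (S := S) hL (fun i ↦ i + i * L)
      (fun i ↦ by rw [add_one_mul]; omega) (n / (L + 1)) using 3 with ω
    simp only [Vhat3, add_one_mul, add_assoc]

/-- In the zero-autocorrelation grid market model, for `v ∈ {2,3}` the variance of the
empirical variance estimator is exactly `(2σ⁴L²τ² + 2σ²LτS² + S⁴/4)/k_v(n,L)`. -/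
theorem Vhat_variance_nonoverlapping_zero_autocorrelation
    {Ω : Type*} [MeasureSpace Ω] [IsProbabilityMeasure (ℙ : Measure Ω)]
    (τ σ S : ℝ) (hτ : 0 < τ) (hσ : 0 < σ) (hS : 0 ≤ S)
    (ξ X : ℕ → Ω → ℝ)
    (hξm : ∀ i, Measurable (ξ i)) (hXm : ∀ i, Measurable (X i))
    (hξ : ∀ i, Measure.map (ξ i) ℙ = gaussianReal 0 (Real.toNNReal (σ ^ 2 * τ)))
    (hXval : ∀ i ω, X i ω = 1 ∨ X i ω = -1)
    (hXlaw : ∀ i, ℙ {ω | X i ω = 1} = 1 / 2)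
    (hIndep : iIndepFun (Sum.elim ξ X) ℙ)
    (n L : ℕ) (hL : 1 ≤ L) (hLn : L < n) :
    (variance (Vhat2 (price ξ X S) n L) ℙ
      = (2 * σ ^ 4 * (L : ℝ) ^ 2 * τ ^ 2 + 2 * σ ^ 2 * (L : ℝ) * τ * S ^ 2 + S ^ 4 / 4)
        / (((n - 1) / L : ℕ) : ℝ)) ∧
    (variance (Vhat3 (price ξ X S) n L) ℙ
      = (2 * σ ^ 4 * (L : ℝ) ^ 2 * τ ^ 2 + 2 * σ ^ 2 * (L : ℝ) * τ * S ^ 2 + S ^ 4 / 4)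
        / ((n / (L + 1) : ℕ) : ℝ)) :=
  Vhat_variance_nonoverlapping_zero_autocorrelation_general τ σ S hτ ξ X hξm hXm hξ hXval hXlaw
    hIndep n L hL
end

section
/- In the zero-autocorrelation grid market model, for every v ∈ {1,2,3} and all fixed integers L, L' with L ≠ L', 1 ≤ L < n, 1 ≤ L' < n (and k_v(n,L) ≥ 1, k_v(n,L') ≥ 1), the spread estimator Ŝ²_{1,v}(n,L,L') = (2/(L'−L))·(L'·V̂_v(n,L) − L·V̂_v(n,L')) is an unbiased estimator of the squared spread: E[Ŝ²_{1,v}(n,L,L')] = S². -/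
open MeasureTheory ProbabilityTheory Filter Finset
open scoped NNReal ENNReal Topology

/-! The increment `p_{a+l} - p_a` splits into the `l` innovations `ξ_a, …, ξ_{a+l-1}` and
the bounce `(S/2)(X_{a+l} - X_a)`. The two parts are centred and independent, so the squared
increment has mean `l σ²τ + S²/2` for every lag `l ≥ 1`. Each `V̂_v(n, L)` averages squared
increments of lag `L`, hence has mean `L σ²τ + S²/2`, and the combination
`L' V̂_v(n, L) - L V̂_v(n, L')` cancels the part linear in the lag, leaving `(L' - L) S²/2`. -/

structure IsRademacher {Ω : Type*} [MeasurableSpace Ω] (X : Ω → ℝ) (μ : Measure Ω) :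
    Prop where
  measurable : Measurable X
  eq_one_or_eq_neg_one : ∀ ω, X ω = 1 ∨ X ω = -1
  measure_eq_one : μ {ω | X ω = 1} = 1 / 2

namespace IsRademacher

variable {Ω : Type*} [MeasurableSpace Ω] {μ : Measure Ω} {X : Ω → ℝ}

lemma memLp [IsFiniteMeasure μ] (hX : IsRademacher X μ) (p : ℝ≥0∞) : MemLp X p μ :=
  MemLp.of_bound hX.measurable.aestronglyMeasurable 1 <| .of_forall fun ω ↦ by
    rcases hX.eq_one_or_eq_neg_one ω with h | h <;> simp [h]

lemma integral_eq_zero [IsProbabilityMeasure μ] (hX : IsRademacher X μ) : μ[X] = 0 := by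
  have hset : MeasurableSet {ω | X ω = 1} := hX.measurable (measurableSet_singleton 1)
  have hX_eq : X = fun ω ↦ {ω | X ω = 1}.indicator (fun _ ↦ (2 : ℝ)) ω - 1 := by
    funext ω
    rcases hX.eq_one_or_eq_neg_one ω with h | h <;> norm_num [Set.indicator, h]
  rw [hX_eq, integral_sub ((integrable_const 2).indicator hset) (integrable_const 1),
    integral_indicator_const _ hset, measureReal_def, hX.measure_eq_one]
  simp

lemma variance_eq_one [IsProbabilityMeasure μ] (hX : IsRademacher X μ) : Var[X; μ] = 1 := by
  have hsq : (fun ω ↦ X ω ^ 2) = fun _ ↦ 1 := by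
    funext ω
    rcases hX.eq_one_or_eq_neg_one ω with h | h <;> simp [h]
  rw [variance_of_integral_eq_zero hX.measurable.aemeasurable hX.integral_eq_zero, hsq]
  simp

lemma variance_const_mul_sub [IsProbabilityMeasure μ] {Y : Ω → ℝ} (hX : IsRademacher X μ)
    (hY : IsRademacher Y μ) (hXY : IndepFun X Y μ) (c : ℝ) :
    Var[fun ω ↦ c * (X ω - Y ω); μ] = 2 * c ^ 2 := by
  rw [variance_const_mul, variance_fun_sub (hX.memLp 2) (hY.memLp 2),
    hXY.covariance_eq_zero (hX.memLp 2) (hY.memLp 2), hX.variance_eq_one, hY.variance_eq_one]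
  ring

end IsRademacher

lemma ProbabilityTheory.iIndepFun.indepFun_finsetSum_inl_prodMk_inr {Ω ι κ : Type*}
    [MeasurableSpace Ω] {μ : Measure Ω} {ξ : ι → Ω → ℝ} {X : κ → Ω → ℝ}
    (h : iIndepFun (Sum.elim ξ X) μ)
    (hξ : ∀ i, AEMeasurable (ξ i) μ) (hX : ∀ k, AEMeasurable (X k) μ)
    (s : Finset ι) (k k' : κ) :
    IndepFun (fun ω ↦ ∑ i ∈ s, ξ i ω) (fun ω ↦ (X k ω, X k' ω)) μ := by
  classical
  set T : Finset (ι ⊕ κ) := {.inr k, .inr k'}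
  have hST : Disjoint (s.map .inl) T := by simp [T, Finset.disjoint_left]
  have hψ : Measurable fun t : T → ℝ ↦
      (t ⟨.inr k, by simp [T]⟩, t ⟨.inr k', by simp [T]⟩) := by
    fun_prop
  have h := (h.indepFun_finset₀ _ _ hST (by rintro (i | i) <;> simp [hξ, hX])).comp
    (φ := fun t ↦ ∑ i, t i) (by fun_prop) hψ
  convert h using 1
  · funext ω
    rw [Function.comp_apply, Finset.sum_coe_sort (s.map .inl) (fun i ↦ Sum.elim ξ X i ω)]
    simp
  · rfl

section Estimators

variable {Ω : Type*} [MeasurableSpace Ω] {μ : Measure Ω} {p : ℕ → Ω → ℝ} {m c : ℝ}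

def HasIntegral (f : Ω → ℝ) (μ : Measure Ω) (x : ℝ) : Prop :=
  Integrable f μ ∧ ∫ ω, f ω ∂μ = x

def HasAffineIncrementMoments (p : ℕ → Ω → ℝ) (μ : Measure Ω) (m c : ℝ) : Prop :=
  ∀ a l, 1 ≤ l → HasIntegral (fun ω ↦ (p (a + l) ω - p a ω) ^ 2) μ (l * m + c)

lemma HasAffineIncrementMoments.hasIntegral_average (h : HasAffineIncrementMoments p μ m c)
    (b : ℕ → ℕ) {k l : ℕ} (hk : k ≠ 0) (hl : 1 ≤ l) :
    HasIntegral (fun ω ↦ (k : ℝ)⁻¹ * ∑ i ∈ range k, (p (b i + l) ω - p (b i) ω) ^ 2)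
      μ (l * m + c) := by
  have hint i := (h (b i) l hl).1
  refine ⟨(integrable_finsetSum _ fun i _ ↦ hint i).const_mul _, ?_⟩
  rw [integral_const_mul, integral_finsetSum _ fun i _ ↦ hint i,
    Finset.sum_congr rfl fun i _ ↦ (h (b i) l hl).2, Finset.sum_const, Finset.card_range,
    nsmul_eq_mul, ← mul_assoc, inv_mul_cancel₀ (by exact_mod_cast hk), one_mul]

lemma HasAffineIncrementMoments.hasIntegral_Vhat1 (h : HasAffineIncrementMoments p μ m c)
    {n l : ℕ} (hl : 1 ≤ l) (hln : l < n) : HasIntegral (Vhat1 p n l) μ (l * m + c) :=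
  h.hasIntegral_average id (by omega) hl

lemma HasAffineIncrementMoments.hasIntegral_Vhat2 (h : HasAffineIncrementMoments p μ m c)
    {n l : ℕ} (hl : 1 ≤ l) (hln : l < n) : HasIntegral (Vhat2 p n l) μ (l * m + c) := by
  have hk : (n - 1) / l ≠ 0 := (Nat.div_pos (by omega) hl).ne'
  unfold Vhat2
  simpa only [add_one_mul] using h.hasIntegral_average (· * l) hk hl

lemma HasAffineIncrementMoments.hasIntegral_Vhat3 (h : HasAffineIncrementMoments p μ m c)
    {n l : ℕ} (hl : 1 ≤ l) (hln : l < n) : HasIntegral (Vhat3 p n l) μ (l * m + c) := by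
  have hk : n / (l + 1) ≠ 0 := (Nat.div_pos (by omega) l.succ_pos).ne'
  unfold Vhat3
  simpa only [add_one_mul, add_assoc] using h.hasIntegral_average (fun i ↦ i + i * l) hk hl

lemma integral_Shat {Vh : ℕ → ℕ → Ω → ℝ} {n L L' : ℕ} (hne : L ≠ L')
    (hL : HasIntegral (Vh n L) μ (L * m + c)) (hL' : HasIntegral (Vh n L') μ (L' * m + c)) :
    ∫ ω, Shat Vh n L L' ω ∂μ = 2 * c := by
  have hd : (L' : ℝ) - L ≠ 0 := sub_ne_zero.mpr (by exact_mod_cast hne.symm)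
  simp only [Shat]
  rw [integral_const_mul, integral_sub (hL.1.const_mul _) (hL'.1.const_mul _),
    integral_const_mul, integral_const_mul, hL.2, hL'.2]
  field_simp
  ring

end Estimators

lemma price_add_sub_price_s7 {Ω : Type*} (ξ X : ℕ → Ω → ℝ) (S : ℝ) (a l : ℕ) (ω : Ω) :
    price ξ X S (a + l) ω - price ξ X S a ω =
      ∑ j ∈ Finset.Ico a (a + l), ξ j ω + S / 2 * (X (a + l) ω - X a ω) := by
  rw [price, price, Finset.sum_Ico_eq_sub _ (Nat.le_add_right a l)]
  ring

section Increment

variable {Ω : Type*} [MeasurableSpace Ω] {μ : Measure Ω} [IsProbabilityMeasure μ]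
  {ξ X : ℕ → Ω → ℝ} {v : ℝ}

lemma hasAffineIncrementMoments_price (S : ℝ) (hξ2 : ∀ i, MemLp (ξ i) 2 μ)
    (hξ0 : ∀ i, μ[ξ i] = 0) (hξv : ∀ i, Var[ξ i; μ] = v)
    (hX : ∀ i, IsRademacher (X i) μ) (hind : iIndepFun (Sum.elim ξ X) μ) :
    HasAffineIncrementMoments (price ξ X S) μ v (S ^ 2 / 2) := by
  intro a l hl
  set A : Ω → ℝ := fun ω ↦ ∑ j ∈ Finset.Ico a (a + l), ξ j ω
  set B : Ω → ℝ := fun ω ↦ S / 2 * (X (a + l) ω - X a ω)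
  have hD : (fun ω ↦ price ξ X S (a + l) ω - price ξ X S a ω) = A + B :=
    funext (price_add_sub_price_s7 ξ X S a l)
  have hX2 i : MemLp (X i) 2 μ := (hX i).memLp 2
  have hA2 : MemLp A 2 μ := memLp_finsetSum _ fun j _ ↦ hξ2 j
  have hB2 : MemLp B 2 μ := ((hX2 _).sub (hX2 _)).const_mul _
  have hAB : IndepFun A B μ :=
    (hind.indepFun_finsetSum_inl_prodMk_inr (fun i ↦ (hξ2 i).aemeasurable)
      (fun i ↦ (hX i).measurable.aemeasurable) (Finset.Ico a (a + l)) (a + l) a).comp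
      measurable_id (by fun_prop : Measurable fun p : ℝ × ℝ ↦ S / 2 * (p.1 - p.2))
  have hA0 : μ[A] = 0 := by
    simp [A, integral_finsetSum _ fun j _ ↦ (hξ2 j).integrable one_le_two, hξ0]
  have hB0 : μ[B] = 0 := by
    rw [integral_const_mul, integral_sub ((hX2 _).integrable one_le_two)
      ((hX2 _).integrable one_le_two), (hX _).integral_eq_zero, (hX _).integral_eq_zero]
    simp
  have hvarA : Var[A; μ] = l * v := by
    have := IndepFun.variance_sum (fun j _ ↦ hξ2 j) (s := Finset.Ico a (a + l))
      fun i _ j _ hij ↦ hind.indepFun (i := .inl i) (j := .inl j) (by simpa using hij)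
    simpa [A, Finset.sum_fn, hξv] using this
  have hvarB : Var[B; μ] = 2 * (S / 2) ^ 2 := (hX _).variance_const_mul_sub (hX _)
    (hind.indepFun (i := .inr _) (j := .inr _) (by simp; omega)) _
  have hD0 : μ[A + B] = 0 := by
    rw [integral_add' (hA2.integrable one_le_two) (hB2.integrable one_le_two), hA0, hB0, add_zero]
  refine ⟨(hD ▸ hA2.add hB2).integrable_sq, ?_⟩
  rw [← variance_of_integral_eq_zero (hD ▸ (hA2.add hB2).aemeasurable) (hD ▸ hD0), hD,
    hAB.variance_add hA2 hB2, hvarA, hvarB]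
  ring

end Increment

theorem Shat_unbiased_zero_autocorrelation_general
    {Ω : Type*} [MeasureSpace Ω] [IsProbabilityMeasure (ℙ : Measure Ω)]
    (τ σ S : ℝ)
    (ξ X : ℕ → Ω → ℝ)
    (hξm : ∀ i, Measurable (ξ i)) (hXm : ∀ i, Measurable (X i))
    (hξ : ∀ i, Measure.map (ξ i) ℙ = gaussianReal 0 (Real.toNNReal (σ ^ 2 * τ)))
    (hXval : ∀ i ω, X i ω = 1 ∨ X i ω = -1)
    (hXlaw : ∀ i, ℙ {ω | X i ω = 1} = 1 / 2)
    (hIndep : iIndepFun (m := fun _ : ℕ ⊕ ℕ => Real.measurableSpace) (Sum.elim ξ X) ℙ)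
    (n L L' : ℕ) (hL : 1 ≤ L) (hL' : 1 ≤ L') (hne : L ≠ L')
    (hLn : L < n) (hL'n : L' < n) :
    (∫ ω, Shat (Vhat1 (price ξ X S)) n L L' ω ∂ℙ = S ^ 2) ∧
    (∫ ω, Shat (Vhat2 (price ξ X S)) n L L' ω ∂ℙ = S ^ 2) ∧
    (∫ ω, Shat (Vhat3 (price ξ X S)) n L L' ω ∂ℙ = S ^ 2) := by
  have hlaw i : HasLaw (ξ i) (gaussianReal 0 (σ ^ 2 * τ).toNNReal) ℙ :=
    ⟨(hξm i).aemeasurable, hξ i⟩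
  have hξ2 i : MemLp (ξ i) 2 ℙ :=
    ((hξ i).symm ▸ memLp_id_gaussianReal' 2 (by simp)).comp_of_map (hξm i).aemeasurable
  have hp := hasAffineIncrementMoments_price S hξ2
    (fun i ↦ (hlaw i).integral_eq.trans integral_id_gaussianReal)
    (fun i ↦ (hlaw i).variance_eq.trans variance_id_gaussianReal)
    (fun i ↦ ⟨hXm i, hXval i, hXlaw i⟩) hIndep
  rw [show S ^ 2 = 2 * (S ^ 2 / 2) by ring]
  exact ⟨integral_Shat hne (hp.hasIntegral_Vhat1 hL hLn) (hp.hasIntegral_Vhat1 hL' hL'n),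
    integral_Shat hne (hp.hasIntegral_Vhat2 hL hLn) (hp.hasIntegral_Vhat2 hL' hL'n),
    integral_Shat hne (hp.hasIntegral_Vhat3 hL hLn) (hp.hasIntegral_Vhat3 hL' hL'n)⟩

/-- In the zero-autocorrelation grid market model, the spread estimators
`Ŝ²_{1,v}(n,L,L')`, `v ∈ {1,2,3}`, are unbiased estimators of `S²`. -/
theorem Shat_unbiased_zero_autocorrelation
    {Ω : Type*} [MeasureSpace Ω] [IsProbabilityMeasure (ℙ : Measure Ω)]
    (τ σ S : ℝ) (hτ : 0 < τ) (hσ : 0 < σ) (hS : 0 ≤ S)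
    (ξ X : ℕ → Ω → ℝ)
    (hξm : ∀ i, Measurable (ξ i)) (hXm : ∀ i, Measurable (X i))
    (hξ : ∀ i, Measure.map (ξ i) ℙ = gaussianReal 0 (Real.toNNReal (σ ^ 2 * τ)))
    (hXval : ∀ i ω, X i ω = 1 ∨ X i ω = -1)
    (hXlaw : ∀ i, ℙ {ω | X i ω = 1} = 1 / 2)
    (hIndep : iIndepFun (m := fun _ : ℕ ⊕ ℕ => Real.measurableSpace) (Sum.elim ξ X) ℙ)
    (n L L' : ℕ) (hL : 1 ≤ L) (hL' : 1 ≤ L') (hne : L ≠ L')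
    (hLn : L < n) (hL'n : L' < n) :
    (∫ ω, Shat (Vhat1 (price ξ X S)) n L L' ω ∂ℙ = S ^ 2) ∧
    (∫ ω, Shat (Vhat2 (price ξ X S)) n L L' ω ∂ℙ = S ^ 2) ∧
    (∫ ω, Shat (Vhat3 (price ξ X S)) n L L' ω ∂ℙ = S ^ 2) :=
  Shat_unbiased_zero_autocorrelation_general τ σ S ξ X hξm hXm hξ hXval hXlaw hIndep n L L' hL hL'
    hne hLn hL'n
end
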